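/- For every ν > 0, the function L(x) = log(I_ν(x)) − ν·log(x) − x is strictly decreasing on (0, ∞); its derivative equals I_{ν+1}(x)/I_ν(x) − 1, which is strictly negative. -/

import Mathlib

/-- The modified Bessel function of the first kind of order `ν`. -/
noncomputable def besselI (ν m : ℝ) : ℝ :=
  ∑' k : ℕ, (1 / ((Nat.factorial k : ℝ) * Real.Gamma (ν + k + 1))) *
    (m / 2) ^ (2 * (k : ℝ) + ν)

open Real
open scoped Nat

/-! Write `I_ν(x) = (x/2)^ν G_ν(x/2)` with the entire series
`G_ν(y) = ∑ c_ν(k) y^(2k)`, `c_ν(k) = 1 / (k! Γ(ν+k+1))`. Termwise differentiation gives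
`G_ν'(y) = 2y G_{ν+1}(y)`, hence the recurrence `I_ν' = I_{ν+1} + (ν/x) I_ν` and
`L' = I_{ν+1}/I_ν - 1`. For `ν ≥ 0` the coefficients satisfy `c_{ν+1}(k)² ≤ c_ν(k) c_ν(k+1)`,
so by AM–GM each term of `y G_{ν+1}(y)` is at most the mean of two consecutive terms of `G_ν(y)`;
summing, `y G_{ν+1}(y) ≤ G_ν(y) - c_ν(0)/2 < G_ν(y)`, i.e. `I_{ν+1} < I_ν`. -/

noncomputable def besselCoeff (ν : ℝ) (k : ℕ) : ℝ :=
  1 / ((k ! : ℝ) * Gamma (ν + k + 1))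

noncomputable def besselSeries (ν y : ℝ) : ℝ :=
  ∑' k : ℕ, besselCoeff ν k * y ^ (2 * k)

section Series

variable {ν : ℝ}

lemma besselCoeff_pos (hν : -1 < ν) (k : ℕ) : 0 < besselCoeff ν k := by
  have : 0 < Gamma (ν + k + 1) := Gamma_pos_of_pos (by linarith [k.cast_nonneg (α := ℝ)])
  unfold besselCoeff
  positivity

lemma besselCoeff_mul_pow_nonneg (hν : -1 < ν) (k : ℕ) (y : ℝ) :
    0 ≤ besselCoeff ν k * y ^ (2 * k) :=
  mul_nonneg (besselCoeff_pos hν k).le ((even_two_mul k).pow_nonneg y)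

lemma besselCoeff_succ_mul (ν : ℝ) (k : ℕ) :
    besselCoeff ν (k + 1) * (k + 1) = besselCoeff (ν + 1) k := by
  rw [besselCoeff, besselCoeff, Nat.factorial_succ,
    show ν + ↑(k + 1) + 1 = ν + 1 + k + 1 by push_cast; ring]
  push_cast
  field_simp

-- At a pole `ν + k + 1 = 0` both sides are `0`, since `Γ 0 = 0`.
lemma besselCoeff_add_one_mul (ν : ℝ) (k : ℕ) :
    besselCoeff (ν + 1) k * (ν + k + 1) = besselCoeff ν k := by
  rcases eq_or_ne (ν + k + 1) 0 with h | h
  · simp [besselCoeff, h, Gamma_zero]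
  · rw [besselCoeff, besselCoeff, add_right_comm ν 1, Gamma_add_one h]
    field_simp

lemma factorial_mul_Gamma_le (hν : 0 ≤ ν) (k : ℕ) :
    (k ! : ℝ) * Gamma (ν + 1) ≤ Gamma (ν + k + 1) := by
  induction k with
  | zero => simp
  | succ k ih =>
    have hpos : 0 < ν + k + 1 := by positivity
    calc ((k + 1) ! : ℝ) * Gamma (ν + 1) = (k + 1) * ((k ! : ℝ) * Gamma (ν + 1)) := by
          push_cast [Nat.factorial_succ]; ring
      _ ≤ (ν + k + 1) * Gamma (ν + k + 1) := by
          gcongr; linarith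
      _ = Gamma (ν + ↑(k + 1) + 1) := by
          rw [← Gamma_add_one hpos.ne']; push_cast; ring_nf

lemma besselCoeff_le (hν : 0 ≤ ν) (k : ℕ) : besselCoeff ν k ≤ 1 / (k ! * Gamma (ν + 1)) := by
  have : 0 < Gamma (ν + 1) := Gamma_pos_of_pos (by positivity)
  refine one_div_le_one_div_of_le (by positivity) ?_
  calc (k ! : ℝ) * Gamma (ν + 1) ≤ k ! * (k ! * Gamma (ν + 1)) := by
        gcongr; exact le_mul_of_one_le_left (by positivity) (mod_cast k.factorial_pos)
    _ ≤ k ! * Gamma (ν + k + 1) := by gcongr; exact factorial_mul_Gamma_le hν k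

lemma summable_besselCoeff_mul_pow (hν : 0 ≤ ν) (y : ℝ) :
    Summable fun k : ℕ => besselCoeff ν k * y ^ (2 * k) := by
  refine .of_nonneg_of_le (fun k => ?_) (fun k => ?_)
    ((summable_pow_div_factorial (y ^ 2)).mul_left (Gamma (ν + 1))⁻¹)
  · exact besselCoeff_mul_pow_nonneg (by linarith) k y
  · calc besselCoeff ν k * y ^ (2 * k) ≤ 1 / (k ! * Gamma (ν + 1)) * y ^ (2 * k) := by
          gcongr
          · exact (even_two_mul k).pow_nonneg y
          · exact besselCoeff_le hν k
      _ = (Gamma (ν + 1))⁻¹ * ((y ^ 2) ^ k / k !) := by rw [← pow_mul]; field_simp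

lemma besselCoeff_add_one_sq_le (hν : 0 ≤ ν) (k : ℕ) :
    besselCoeff (ν + 1) k ^ 2 ≤ besselCoeff ν k * besselCoeff ν (k + 1) := by
  have hk : (0 : ℝ) < k + 1 := by positivity
  refine le_of_mul_le_mul_right ?_ hk
  calc besselCoeff (ν + 1) k ^ 2 * (k + 1) ≤ besselCoeff (ν + 1) k ^ 2 * (ν + k + 1) := by
        gcongr; linarith
    _ = besselCoeff ν k * besselCoeff ν (k + 1) * (k + 1) := by
        rw [mul_assoc, besselCoeff_succ_mul, ← besselCoeff_add_one_mul ν k]; ring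

lemma two_mul_besselCoeff_add_one_le (hν : 0 ≤ ν) (k : ℕ) (y : ℝ) :
    2 * (y * (besselCoeff (ν + 1) k * y ^ (2 * k))) ≤
      besselCoeff ν k * y ^ (2 * k) + besselCoeff ν (k + 1) * y ^ (2 * (k + 1)) := by
  refine two_mul_le_add_of_sq_le_mul (besselCoeff_mul_pow_nonneg (by linarith) k y)
    (besselCoeff_mul_pow_nonneg (by linarith) (k + 1) y) ?_
  calc (y * (besselCoeff (ν + 1) k * y ^ (2 * k))) ^ 2
      = besselCoeff (ν + 1) k ^ 2 * (y ^ (2 * k) * y ^ (2 * (k + 1))) := by ring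
    _ ≤ besselCoeff ν k * besselCoeff ν (k + 1) * (y ^ (2 * k) * y ^ (2 * (k + 1))) := by
        gcongr
        · exact mul_nonneg ((even_two_mul k).pow_nonneg y) ((even_two_mul (k + 1)).pow_nonneg y)
        · exact besselCoeff_add_one_sq_le hν k
    _ = _ := by ring

lemma besselSeries_pos (hν : 0 ≤ ν) (y : ℝ) : 0 < besselSeries ν y := by
  refine (summable_besselCoeff_mul_pow hν y).tsum_pos (fun k => ?_) 0 ?_
  · exact besselCoeff_mul_pow_nonneg (by linarith) k y
  · simpa using besselCoeff_pos (by linarith) 0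

lemma mul_besselSeries_add_one_lt (hν : 0 ≤ ν) (y : ℝ) :
    y * besselSeries (ν + 1) y < besselSeries ν y := by
  set t : ℕ → ℝ := fun k => besselCoeff ν k * y ^ (2 * k)
  have ht : Summable t := summable_besselCoeff_mul_pow hν y
  have ht' : Summable fun k => t (k + 1) := (summable_nat_add_iff 1).mpr ht
  have hshift : ∑' k, t k = t 0 + ∑' k, t (k + 1) := ht.tsum_eq_zero_add
  have ht0 : 0 < t 0 := by simpa [t] using besselCoeff_pos (by linarith) 0
  have hle : 2 * (y * besselSeries (ν + 1) y) ≤ ∑' k, (t k + t (k + 1)) := by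
    rw [besselSeries, ← tsum_mul_left, ← tsum_mul_left]
    exact ((summable_besselCoeff_mul_pow (by linarith) y).mul_left y |>.mul_left 2).tsum_le_tsum
      (two_mul_besselCoeff_add_one_le hν · y) (ht.add ht')
  rw [ht.tsum_add ht'] at hle
  change _ < ∑' k, t k
  linarith

lemma hasDerivAt_besselSeries (hν : 0 ≤ ν) (y : ℝ) :
    HasDerivAt (besselSeries ν) (2 * y * besselSeries (ν + 1) y) y := by
  set R := |y| + 1
  -- Splitting off the constant term makes term `k` differentiate to a multiple of term `k` of
  -- `besselSeries (ν + 1)`, with no truncated exponent `2 * k - 1`.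
  have hshift : besselSeries ν =
      fun z => besselCoeff ν 0 + ∑' k : ℕ, besselCoeff ν (k + 1) * z ^ (2 * (k + 1)) := by
    funext z
    rw [besselSeries, (summable_besselCoeff_mul_pow hν z).tsum_eq_zero_add]
    simp
  have hterm (k : ℕ) (z : ℝ) : HasDerivAt (fun z => besselCoeff ν (k + 1) * z ^ (2 * (k + 1)))
      (2 * z * (besselCoeff (ν + 1) k * z ^ (2 * k))) z := by
    refine ((hasDerivAt_pow (2 * (k + 1)) z).const_mul (besselCoeff ν (k + 1))).congr_deriv ?_
    rw [← besselCoeff_succ_mul, show 2 * (k + 1) - 1 = 2 * k + 1 by omega]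
    push_cast
    ring
  have hbound (k : ℕ) (z : ℝ) (hz : z ∈ Metric.ball 0 R) :
      ‖2 * z * (besselCoeff (ν + 1) k * z ^ (2 * k))‖ ≤
        2 * R * (besselCoeff (ν + 1) k * R ^ (2 * k)) := by
    have hzR : |z| ≤ R := (mem_ball_zero_iff.mp hz).le
    have hc : 0 < besselCoeff (ν + 1) k := besselCoeff_pos (by linarith) k
    rw [Real.norm_eq_abs, abs_mul, abs_mul, abs_mul, abs_pow, abs_two, abs_of_pos hc]
    gcongr
  have hy : y ∈ Metric.ball (0 : ℝ) R := by simp [R]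
  rw [hshift, besselSeries, ← tsum_mul_left]
  refine .const_add _ (hasDerivAt_tsum_of_isPreconnected
    ((summable_besselCoeff_mul_pow (by linarith) R).mul_left (2 * R)) Metric.isOpen_ball
    (convex_ball 0 R).isPreconnected (fun k z _ => hterm k z) hbound hy ?_ hy)
  exact (summable_nat_add_iff 1).mpr (summable_besselCoeff_mul_pow hν y)

end Series

section BesselI

variable {ν x : ℝ}

lemma besselI_eq_rpow_mul_besselSeries (ν : ℝ) (hx : 0 < x) :
    besselI ν x = (x / 2) ^ ν * besselSeries ν (x / 2) := by
  rw [besselI, besselSeries, ← tsum_mul_left]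
  refine tsum_congr fun k => ?_
  rw [rpow_add (by positivity), ← Nat.cast_ofNat, ← Nat.cast_mul, rpow_natCast, besselCoeff]
  ring

lemma besselI_add_one_eq (ν : ℝ) (hx : 0 < x) :
    besselI (ν + 1) x = (x / 2) ^ ν * (x / 2 * besselSeries (ν + 1) (x / 2)) := by
  rw [besselI_eq_rpow_mul_besselSeries _ hx, rpow_add_one (by positivity)]
  ring

lemma besselI_pos (hν : 0 ≤ ν) (hx : 0 < x) : 0 < besselI ν x := by
  rw [besselI_eq_rpow_mul_besselSeries ν hx]
  exact mul_pos (by positivity) (besselSeries_pos hν _)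

lemma besselI_add_one_lt (hν : 0 ≤ ν) (hx : 0 < x) : besselI (ν + 1) x < besselI ν x := by
  rw [besselI_add_one_eq ν hx, besselI_eq_rpow_mul_besselSeries ν hx]
  exact mul_lt_mul_of_pos_left (mul_besselSeries_add_one_lt hν _) (by positivity)

lemma hasDerivAt_besselI (hν : 0 ≤ ν) (hx : 0 < x) :
    HasDerivAt (besselI ν) (besselI (ν + 1) x + ν / x * besselI ν x) x := by
  have hhalf : HasDerivAt (fun z : ℝ => z / 2) (1 / 2) x := (hasDerivAt_id x).div_const 2
  have hpow := (hasDerivAt_rpow_const (p := ν) (Or.inl (by positivity : x / 2 ≠ 0))).comp x hhalf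
  have hser := (hasDerivAt_besselSeries hν (x / 2)).comp x hhalf
  have heq : (fun z => (z / 2) ^ ν * besselSeries ν (z / 2)) =ᶠ[nhds x] besselI ν := by
    filter_upwards [lt_mem_nhds hx] with z hz
    exact (besselI_eq_rpow_mul_besselSeries ν hz).symm
  refine ((hpow.mul hser).congr_of_eventuallyEq heq.symm).congr_deriv ?_
  simp only [Function.comp_apply]
  rw [besselI_add_one_eq ν hx, besselI_eq_rpow_mul_besselSeries ν hx,
    rpow_sub_one (by positivity)]
  field_simp
  ring

end BesselI

theorem besselI_L_strictAnti (ν : ℝ) (hν : 0 < ν) :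
    StrictAntiOn (fun x : ℝ => Real.log (besselI ν x) - ν * Real.log x - x) (Set.Ioi 0) ∧
    ∀ x : ℝ, 0 < x →
      HasDerivAt (fun x : ℝ => Real.log (besselI ν x) - ν * Real.log x - x)
        (besselI (ν + 1) x / besselI ν x - 1) x ∧
      besselI (ν + 1) x / besselI ν x - 1 < 0 := by
  have hderiv (x : ℝ) (hx : 0 < x) :
      HasDerivAt (fun x : ℝ => Real.log (besselI ν x) - ν * Real.log x - x)
        (besselI (ν + 1) x / besselI ν x - 1) x := by
    have hI := besselI_pos hν.le hx
    refine ((((hasDerivAt_besselI hν.le hx).log hI.ne').sub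
      ((hasDerivAt_log hx.ne').const_mul ν)).sub (hasDerivAt_id x)).congr_deriv ?_
    field_simp
    ring
  have hneg (x : ℝ) (hx : 0 < x) : besselI (ν + 1) x / besselI ν x - 1 < 0 :=
    sub_neg.mpr ((div_lt_one (besselI_pos hν.le hx)).mpr (besselI_add_one_lt hν.le hx))
  refine ⟨strictAntiOn_of_deriv_neg (convex_Ioi 0)
    (fun x hx => (hderiv x hx).continuousAt.continuousWithinAt) fun x hx => ?_,
    fun x hx => ⟨hderiv x hx, hneg x hx⟩⟩
  rw [interior_Ioi] at hx
  exact (hderiv x hx).deriv ▸ hneg x hx
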